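/- Let N ≥ 1 be an integer and σ ∈ (0,2) with N + σ ≥ 2. Then the constant c(N,σ) := ∫_0^∞ s^{1−σ}/(s² + 1) ds is finite, and for every R > 0 and every y > 0 one has ∫_0^R r^{1−σ} ((r² + y²)^{(N+σ)/2} − r^{N+σ}) / (r² + y²)^{(N+σ)/2} dr ≤ ((N+σ)/2) · c(N,σ) · y^{2−σ}. -/

import Mathlib

/-!
By Bernoulli's inequality, `1 - (r² / (r² + y²)) ^ p ≤ p y² / (r² + y²)` for `p = (N + σ) / 2 ≥ 1`,
so the integrand is at most `p y² r^{1-σ} / (r² + y²)`. Extending the integral of this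
nonnegative function to `(0, ∞)` and substituting `r = y s` gives `p y² · y^{-σ} c(N, σ)`.
-/

open MeasureTheory Set

theorem integrableOn_rpow_div_sq_add {σ c : ℝ} (hσ0 : 0 < σ) (hσ2 : σ < 2) (hc : 0 < c) :
    IntegrableOn (fun s : ℝ => s ^ (1 - σ) / (s ^ 2 + c)) (Ioi 0) := by
  have hmeas : AEStronglyMeasurable (fun s : ℝ => s ^ (1 - σ) / (s ^ 2 + c)) volume :=
    (Measurable.div (by fun_prop) (by fun_prop)).aestronglyMeasurable
  rw [← Ioc_union_Ioi_eq_Ioi zero_le_one]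
  refine IntegrableOn.union ?_ ?_
  · have hdom : IntegrableOn (fun s : ℝ => s ^ (1 - σ) / c) (Ioc 0 1) :=
      ((intervalIntegrable_iff_integrableOn_Ioc_of_le zero_le_one).mp
        (intervalIntegral.intervalIntegrable_rpow' (by linarith))).div_const c
    refine hdom.mono' hmeas.restrict ?_
    filter_upwards [ae_restrict_mem measurableSet_Ioc] with s hs
    have hs0 : 0 < s := hs.1
    rw [Real.norm_of_nonneg (by positivity)]
    gcongr
    exact le_add_of_nonneg_left (sq_nonneg s)
  · have hdom : IntegrableOn (fun s : ℝ => s ^ (-1 - σ)) (Ioi 1) :=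
      integrableOn_Ioi_rpow_of_lt (by linarith) one_pos
    refine hdom.mono' hmeas.restrict ?_
    filter_upwards [ae_restrict_mem measurableSet_Ioi] with s (hs : 1 < s)
    have hs0 : 0 < s := one_pos.trans hs
    rw [Real.norm_of_nonneg (by positivity)]
    calc s ^ (1 - σ) / (s ^ 2 + c) ≤ s ^ (1 - σ) / s ^ (2 : ℝ) := by
          rw [Real.rpow_two]
          gcongr
          linarith
      _ = s ^ (-1 - σ) := by rw [← Real.rpow_sub hs0]; ring_nf

theorem integral_rpow_div_sq_add_sq {σ y : ℝ} (hy : 0 < y) :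
    ∫ r in Ioi 0, r ^ (1 - σ) / (r ^ 2 + y ^ 2)
      = y ^ (-σ) * ∫ s in Ioi 0, s ^ (1 - σ) / (s ^ 2 + 1) := by
  have hscale : ∀ s ∈ Ioi (0 : ℝ), (y * s) ^ (1 - σ) / ((y * s) ^ 2 + y ^ 2)
      = y ^ (-1 - σ) * (s ^ (1 - σ) / (s ^ 2 + 1)) := by
    intro s (hs : 0 < s)
    have hy' : y ^ (1 - σ) = y ^ (-1 - σ) * y ^ 2 := by
      rw [← Real.rpow_two, ← Real.rpow_add hy]; ring_nf
    rw [Real.mul_rpow hy.le hs.le, hy']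
    field_simp
  have := integral_comp_mul_left_Ioi' (fun r => r ^ (1 - σ) / (r ^ 2 + y ^ 2)) 0 hy
  rw [mul_zero] at this
  rw [← this, setIntegral_congr_fun measurableSet_Ioi hscale, integral_const_mul, smul_eq_mul,
    ← mul_assoc, show -σ = 1 + (-1 - σ) by ring, Real.rpow_add hy, Real.rpow_one]

/-- Bernoulli's inequality `(1 - t) ^ p ≥ 1 - p t` at `t = b / (a + b)`. -/
theorem rpow_add_sub_rpow_div_le {p a b : ℝ} (hp : 1 ≤ p) (ha : 0 ≤ a) (hb : 0 ≤ b) :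
    ((a + b) ^ p - a ^ p) / (a + b) ^ p ≤ p * b / (a + b) := by
  rcases (add_nonneg ha hb).eq_or_lt with hab | hab
  · rw [← hab, Real.zero_rpow (by linarith)]
    simp
  have hbernoulli := one_add_mul_self_le_rpow_one_add (s := -(b / (a + b)))
    (by linarith [div_le_one_of_le₀ (le_add_of_nonneg_left ha) hab.le]) hp
  rw [show 1 + -(b / (a + b)) = a / (a + b) by field_simp; ring,
    Real.div_rpow ha hab.le] at hbernoulli
  rw [sub_div, div_self (Real.rpow_pos_of_pos hab p).ne', mul_div_assoc]
  linarith

theorem rpow_sq_add_sq_sub_rpow_div_le {q σ r y : ℝ} (hq : 2 ≤ q) (hr : 0 ≤ r) :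
    r ^ (1 - σ) * ((r ^ 2 + y ^ 2) ^ (q / 2) - r ^ q) / (r ^ 2 + y ^ 2) ^ (q / 2)
      ≤ q / 2 * y ^ 2 * (r ^ (1 - σ) / (r ^ 2 + y ^ 2)) := by
  have hsq : r ^ q = (r ^ 2) ^ (q / 2) := by
    rw [← Real.rpow_two, ← Real.rpow_mul hr]; ring_nf
  rw [hsq, mul_div_assoc]
  calc r ^ (1 - σ) * (((r ^ 2 + y ^ 2) ^ (q / 2) - (r ^ 2) ^ (q / 2)) / (r ^ 2 + y ^ 2) ^ (q / 2))
      ≤ r ^ (1 - σ) * (q / 2 * y ^ 2 / (r ^ 2 + y ^ 2)) := by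
        refine mul_le_mul_of_nonneg_left ?_ (by positivity)
        exact rpow_add_sub_rpow_div_le (by linarith) (sq_nonneg r) (sq_nonneg y)
    _ = q / 2 * y ^ 2 * (r ^ (1 - σ) / (r ^ 2 + y ^ 2)) := by ring

theorem intervalIntegrable_rpow_mul_rpow_sq_add_sq_sub_rpow_div {q σ R y : ℝ} (hq : 0 ≤ q)
    (hσ : σ < 2) (hy : 0 < y) :
    IntervalIntegrable
      (fun r : ℝ => r ^ (1 - σ) * ((r ^ 2 + y ^ 2) ^ (q / 2) - r ^ q) / (r ^ 2 + y ^ 2) ^ (q / 2))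
      volume 0 R := by
  simp_rw [mul_div_assoc]
  refine (intervalIntegral.intervalIntegrable_rpow' (by linarith)).mul_continuousOn
    (Continuous.continuousOn ?_)
  have hpos : ∀ r : ℝ, 0 < (r ^ 2 + y ^ 2) ^ (q / 2) := fun r => by positivity
  have hA : Continuous fun r : ℝ => (r ^ 2 + y ^ 2) ^ (q / 2) :=
    (by fun_prop : Continuous fun r : ℝ => r ^ 2 + y ^ 2).rpow_const fun r => .inl (by positivity)
  exact (hA.sub (continuous_id.rpow_const fun _ => .inr hq)).div hA fun r => (hpos r).ne'

theorem intervalIntegral_le_setIntegral_Ioi {f : ℝ → ℝ} {R : ℝ} (hR : 0 ≤ R)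
    (hf : IntegrableOn f (Ioi 0)) (hf0 : ∀ r ∈ Ioi (0 : ℝ), 0 ≤ f r) :
    ∫ r in (0 : ℝ)..R, f r ≤ ∫ r in Ioi 0, f r := by
  rw [intervalIntegral.integral_of_le hR]
  exact setIntegral_mono_set hf ((ae_restrict_mem measurableSet_Ioi).mono hf0)
    Ioc_subset_Ioi_self.eventuallyLE

theorem integral_rpow_mul_rpow_sq_add_sq_sub_rpow_div_le {q σ R y : ℝ} (hq : 2 ≤ q)
    (hσ0 : 0 < σ) (hσ2 : σ < 2) (hR : 0 ≤ R) (hy : 0 < y) :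
    ∫ r in (0 : ℝ)..R,
        r ^ (1 - σ) * ((r ^ 2 + y ^ 2) ^ (q / 2) - r ^ q) / (r ^ 2 + y ^ 2) ^ (q / 2)
      ≤ q / 2 * (∫ s in Ioi 0, s ^ (1 - σ) / (s ^ 2 + 1)) * y ^ (2 - σ) := by
  set g : ℝ → ℝ := fun r => r ^ (1 - σ) / (r ^ 2 + y ^ 2)
  have hg : IntegrableOn g (Ioi 0) := integrableOn_rpow_div_sq_add hσ0 hσ2 (by positivity)
  have hg0 : ∀ r ∈ Ioi (0 : ℝ), 0 ≤ g r := fun r (hr : 0 < r) => by positivity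
  calc ∫ r in (0 : ℝ)..R,
        r ^ (1 - σ) * ((r ^ 2 + y ^ 2) ^ (q / 2) - r ^ q) / (r ^ 2 + y ^ 2) ^ (q / 2)
      ≤ ∫ r in (0 : ℝ)..R, q / 2 * y ^ 2 * g r :=
        intervalIntegral.integral_mono_on hR
          (intervalIntegrable_rpow_mul_rpow_sq_add_sq_sub_rpow_div (by linarith) hσ2 hy)
          (((intervalIntegrable_iff_integrableOn_Ioc_of_le hR).2
            (hg.mono_set Ioc_subset_Ioi_self)).const_mul _)
          fun r hr => rpow_sq_add_sq_sub_rpow_div_le hq hr.1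
    _ = q / 2 * y ^ 2 * ∫ r in (0 : ℝ)..R, g r := intervalIntegral.integral_const_mul _ _
    _ ≤ q / 2 * y ^ 2 * ∫ r in Ioi 0, g r := by
        gcongr
        exact intervalIntegral_le_setIntegral_Ioi hR hg hg0
    _ = q / 2 * (∫ s in Ioi 0, s ^ (1 - σ) / (s ^ 2 + 1)) * y ^ (2 - σ) := by
        rw [integral_rpow_div_sq_add_sq hy, Real.rpow_sub hy, Real.rpow_neg hy.le, Real.rpow_two]
        ring

theorem stmt5 (N : ℕ) (σ : ℝ) (hσ : σ ∈ Set.Ioo (0:ℝ) 2)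
    (h2 : (2:ℝ) ≤ (N : ℝ) + σ) :
    IntegrableOn (fun s : ℝ => s ^ (1 - σ) / (s ^ 2 + 1)) (Set.Ioi 0) volume
    ∧ ∀ R > (0:ℝ), ∀ y > (0:ℝ),
        (∫ r in (0:ℝ)..R,
          r ^ (1 - σ) *
            ((r ^ 2 + y ^ 2) ^ (((N : ℝ) + σ) / 2) - r ^ ((N : ℝ) + σ)) /
              (r ^ 2 + y ^ 2) ^ (((N : ℝ) + σ) / 2))
        ≤ (((N : ℝ) + σ) / 2) * (∫ s in Set.Ioi (0:ℝ), s ^ (1 - σ) / (s ^ 2 + 1)) *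
            y ^ (2 - σ) :=
  ⟨integrableOn_rpow_div_sq_add hσ.1 hσ.2 one_pos, fun _ hR _ hy =>
    integral_rpow_mul_rpow_sq_add_sq_sub_rpow_div_le h2 hσ.1 hσ.2 hR.le hy⟩
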